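/- Let Θ, Θ': ℝ → ℝⁿ be C¹ with Θ_ε'' and Θ_ε''' bounds: assume |Θ'(s)| ≤ Kε^{-a}, |Θ''(s)| ≤ Kε^{-b}, |Θ'''(s)| ≤ Kε^{-c} for all s, with b < 1 and a + c < 2. Define f(s,t) = √(1+|Θ'(s)|²ε²t²) and W(s,t) = -7|Θ'·Θ''|²ε⁴t⁴/(4f⁶) + (2|Θ''|² + 2Θ'·Θ''' − 3|Θ'|⁴)ε²t²/(4f⁴) + |Θ'|²/(2f²). Then there is K' > 0 with ‖W − |Θ'|²/2‖_{L^∞(ℝ×(-1,1))} ≤ K'(ε^{4-2(a+b)} + ε^{2-2b} + ε^{2-(a+c)} + ε^{2-4a}) for all small ε > 0; in particular W − |Θ'|²/2 → 0 uniformly as ε → 0. -/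

import Mathlib

/-- `f_ε(s,t) = √(1+|Θ'(s)|²ε²t²)` for a curve family. -/
noncomputable def fFun {n : ℕ} (Θ : ℝ → EuclideanSpace ℝ (Fin n)) (ε s t : ℝ) : ℝ :=
  Real.sqrt (1 + ‖deriv Θ s‖ ^ 2 * ε ^ 2 * t ^ 2)

/-- The effective potential
`W = -7|Θ'·Θ''|²ε⁴t⁴/(4f⁶) + (2|Θ''|²+2Θ'·Θ'''-3|Θ'|⁴)ε²t²/(4f⁴) + |Θ'|²/(2f²)`. -/
noncomputable def WFun {n : ℕ} (Θ : ℝ → EuclideanSpace ℝ (Fin n)) (ε s t : ℝ) : ℝ :=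
  -(7 * (inner ℝ (deriv Θ s) (deriv (deriv Θ) s) : ℝ) ^ 2 * ε ^ 4 * t ^ 4)
      / (4 * fFun Θ ε s t ^ 6)
    + (2 * ‖deriv (deriv Θ) s‖ ^ 2
        + 2 * (inner ℝ (deriv Θ s) (deriv (deriv (deriv Θ)) s) : ℝ)
        - 3 * ‖deriv Θ s‖ ^ 4) * ε ^ 2 * t ^ 2 / (4 * fFun Θ ε s t ^ 4)
    + ‖deriv Θ s‖ ^ 2 / (2 * fFun Θ ε s t ^ 2)

/-!
Since `f ≥ 1` and `|t| < 1`, every term of `W - |Θ'|²/2` is bounded by its numerator, once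
`|Θ'|²/(2f²) - |Θ'|²/2` is rewritten as `-|Θ'|⁴ε²t²/(2f²)` using `f² = 1 + |Θ'|²ε²t²`.
Cauchy–Schwarz bounds the inner products by products of the derivative bounds, which turns the
numerators into the four powers `ε^{4-2(a+b)}, ε^{2-2b}, ε^{2-(a+c)}, ε^{2-4a}`. Their exponents
are positive, so the supremum over the strip tends to `0` with `ε`.
-/

open Filter Topology

lemma abs_mul_pow_div_le {x M d F t : ℝ} (k m : ℕ) (hx : |x| ≤ M) (hd : 0 < d)
    (hF : 1 ≤ F) (ht : |t| ≤ 1) : |x * t ^ k / (d * F ^ m)| ≤ M / d := by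
  have hFm : 1 ≤ F ^ m := one_le_pow₀ hF
  have htk : |t| ^ k ≤ 1 := pow_le_one₀ (abs_nonneg t) ht
  rw [abs_div, abs_mul, abs_pow, abs_of_pos (by positivity : 0 < d * F ^ m)]
  calc |x| * |t| ^ k / (d * F ^ m) ≤ |x| * 1 / (d * 1) := by gcongr
    _ ≤ M / d := by simpa using div_le_div_of_nonneg_right hx hd.le

section Potential

variable {n : ℕ} (Θ : ℝ → EuclideanSpace ℝ (Fin n)) (ε s t : ℝ)

lemma fFun_sq : fFun Θ ε s t ^ 2 = 1 + ‖deriv Θ s‖ ^ 2 * ε ^ 2 * t ^ 2 :=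
  Real.sq_sqrt (by positivity)

lemma one_le_fFun : 1 ≤ fFun Θ ε s t :=
  Real.one_le_sqrt.mpr (le_add_of_nonneg_right (by positivity))

lemma WFun_sub_half_sq_eq :
    WFun Θ ε s t - ‖deriv Θ s‖ ^ 2 / 2 =
      -(7 * inner ℝ (deriv Θ s) (deriv (deriv Θ) s) ^ 2 * ε ^ 4) * t ^ 4
          / (4 * fFun Θ ε s t ^ 6)
        + (2 * ‖deriv (deriv Θ) s‖ ^ 2
            + 2 * inner ℝ (deriv Θ s) (deriv (deriv (deriv Θ)) s)
            - 3 * ‖deriv Θ s‖ ^ 4) * ε ^ 2 * t ^ 2 / (4 * fFun Θ ε s t ^ 4)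
        + -(‖deriv Θ s‖ ^ 4 * ε ^ 2) * t ^ 2 / (2 * fFun Θ ε s t ^ 2) := by
  have hf : fFun Θ ε s t ≠ 0 := (one_pos.trans_le (one_le_fFun Θ ε s t)).ne'
  have hsq := fFun_sq Θ ε s t
  rw [WFun]
  field_simp
  linear_combination (-4 * fFun Θ ε s t ^ 4 * ‖deriv Θ s‖ ^ 2) * hsq

lemma abs_WFun_sub_half_sq_le {A B C : ℝ} (ht : |t| ≤ 1) (hA : ‖deriv Θ s‖ ≤ A)
    (hB : ‖deriv (deriv Θ) s‖ ≤ B) (hC : ‖deriv (deriv (deriv Θ)) s‖ ≤ C) :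
    |WFun Θ ε s t - ‖deriv Θ s‖ ^ 2 / 2|
      ≤ 7 / 4 * (A ^ 2 * B ^ 2 * ε ^ 4 + B ^ 2 * ε ^ 2 + A * C * ε ^ 2 + A ^ 4 * ε ^ 2) := by
  have hA0 : 0 ≤ A := (norm_nonneg _).trans hA
  have hC0 : 0 ≤ C := (norm_nonneg _).trans hC
  have hf := one_le_fFun Θ ε s t
  rw [WFun_sub_half_sq_eq]
  set P := ‖deriv Θ s‖
  set Q := ‖deriv (deriv Θ) s‖
  set I₁ : ℝ := inner ℝ (deriv Θ s) (deriv (deriv Θ) s)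
  set I₂ : ℝ := inner ℝ (deriv Θ s) (deriv (deriv (deriv Θ)) s)
  have hP4 : P ^ 4 ≤ A ^ 4 := pow_le_pow_left₀ (norm_nonneg _) hA 4
  have hQ2 : Q ^ 2 ≤ B ^ 2 := pow_le_pow_left₀ (norm_nonneg _) hB 2
  have hI₁ : |I₁| ≤ A * B :=
    (abs_real_inner_le_norm _ _).trans (mul_le_mul hA hB (norm_nonneg _) hA0)
  have hI₂ : |I₂| ≤ A * C :=
    (abs_real_inner_le_norm _ _).trans (mul_le_mul hA hC (norm_nonneg _) hA0)
  have hI₁sq : I₁ ^ 2 ≤ A ^ 2 * B ^ 2 := by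
    rw [← sq_abs, ← mul_pow]; exact pow_le_pow_left₀ (abs_nonneg _) hI₁ 2
  have hε2 : 0 ≤ ε ^ 2 := sq_nonneg ε
  have h₁ : |-(7 * I₁ ^ 2 * ε ^ 4)| ≤ 7 * (A ^ 2 * B ^ 2 * ε ^ 4) := by
    rw [abs_neg, abs_of_nonneg (by positivity)]
    linarith [mul_le_mul_of_nonneg_right hI₁sq (by positivity : (0 : ℝ) ≤ ε ^ 4)]
  have h₂ : |(2 * Q ^ 2 + 2 * I₂ - 3 * P ^ 4) * ε ^ 2|
      ≤ (2 * B ^ 2 + 2 * (A * C) + 3 * A ^ 4) * ε ^ 2 := by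
    rw [abs_mul, abs_of_nonneg hε2]
    gcongr
    rw [abs_le]
    constructor <;> nlinarith [abs_le.mp hI₂, sq_nonneg Q, pow_nonneg (norm_nonneg (deriv Θ s)) 4]
  have h₃ : |-(P ^ 4 * ε ^ 2)| ≤ A ^ 4 * ε ^ 2 := by
    rw [abs_neg, abs_of_nonneg (by positivity)]; gcongr
  calc _ ≤ _ := abs_add_three _ _ _
    _ ≤ 7 * (A ^ 2 * B ^ 2 * ε ^ 4) / 4 + (2 * B ^ 2 + 2 * (A * C) + 3 * A ^ 4) * ε ^ 2 / 4
          + A ^ 4 * ε ^ 2 / 2 := by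
      gcongr
      · exact abs_mul_pow_div_le 4 6 h₁ (by norm_num) hf ht
      · exact abs_mul_pow_div_le 2 4 h₂ (by norm_num) hf ht
      · exact abs_mul_pow_div_le 2 2 h₃ (by norm_num) hf ht
    _ ≤ _ := by nlinarith [mul_nonneg (sq_nonneg B) hε2, mul_nonneg (mul_nonneg hA0 hC0) hε2,
          mul_nonneg (pow_nonneg hA0 4) hε2]

end Potential

lemma abs_WFun_sub_half_sq_le_rpow {n : ℕ} (Θ : ℝ → EuclideanSpace ℝ (Fin n)) {ε : ℝ}
    (hε : 0 < ε) (s : ℝ) {t : ℝ} (ht : |t| ≤ 1) {a b c K : ℝ}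
    (hA : ‖deriv Θ s‖ ≤ K * ε ^ (-a)) (hB : ‖deriv (deriv Θ) s‖ ≤ K * ε ^ (-b))
    (hC : ‖deriv (deriv (deriv Θ)) s‖ ≤ K * ε ^ (-c)) :
    |WFun Θ ε s t - ‖deriv Θ s‖ ^ 2 / 2|
      ≤ 7 / 4 * (K ^ 2 + 1) ^ 2 * (ε ^ (4 - 2 * (a + b)) + ε ^ (2 - 2 * b)
          + ε ^ (2 - (a + c)) + ε ^ (2 - 4 * a)) := by
  have hK4 : K ^ 4 ≤ (K ^ 2 + 1) ^ 2 := by nlinarith [sq_nonneg K]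
  have hK2 : K ^ 2 ≤ (K ^ 2 + 1) ^ 2 := by nlinarith [sq_nonneg K]
  have hpos : ∀ x : ℝ, 0 ≤ ε ^ x := fun x => Real.rpow_nonneg hε.le x
  calc _ ≤ 7 / 4 * (K ^ 4 * ε ^ (4 - 2 * (a + b)) + K ^ 2 * ε ^ (2 - 2 * b)
          + K ^ 2 * ε ^ (2 - (a + c)) + K ^ 4 * ε ^ (2 - 4 * a)) := by
        refine (abs_WFun_sub_half_sq_le Θ ε s t ht hA hB hC).trans_eq ?_
        rw [show 4 - 2 * (a + b) = -a + -a + -b + -b + (4 : ℕ) by push_cast; ring,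
          show 2 - 2 * b = -b + -b + (2 : ℕ) by push_cast; ring,
          show 2 - (a + c) = -a + -c + (2 : ℕ) by push_cast; ring,
          show 2 - 4 * a = -a + -a + -a + -a + (2 : ℕ) by push_cast; ring]
        simp only [Real.rpow_add hε, Real.rpow_natCast]
        ring
    _ ≤ _ := by
        nlinarith [mul_le_mul_of_nonneg_right hK4 (hpos (4 - 2 * (a + b))),
          mul_le_mul_of_nonneg_right hK2 (hpos (2 - 2 * b)),
          mul_le_mul_of_nonneg_right hK2 (hpos (2 - (a + c))),
          mul_le_mul_of_nonneg_right hK4 (hpos (2 - 4 * a))]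

lemma tendsto_rpow_nhdsGT_zero {p : ℝ} (hp : 0 < p) :
    Tendsto (fun ε : ℝ => ε ^ p) (𝓝[>] 0) (𝓝 0) := by
  have h := (Real.continuousAt_rpow_const 0 p (Or.inr hp.le)).tendsto
  rw [Real.zero_rpow hp.ne'] at h
  exact h.mono_left nhdsWithin_le_nhds

theorem stmt_19_general (n : ℕ) (a b c K : ℝ) (ha' : a < 1 / 3)
    (hb : b < 1) (hac : a + c < 2)
    (Θfam : ℝ → ℝ → EuclideanSpace ℝ (Fin n))
    (h1 : ∀ ε ∈ Set.Ioo (0 : ℝ) 1, ∀ s : ℝ, ‖deriv (Θfam ε) s‖ ≤ K * ε ^ (-a))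
    (h2 : ∀ ε ∈ Set.Ioo (0 : ℝ) 1, ∀ s : ℝ,
      ‖deriv (deriv (Θfam ε)) s‖ ≤ K * ε ^ (-b))
    (h3 : ∀ ε ∈ Set.Ioo (0 : ℝ) 1, ∀ s : ℝ,
      ‖deriv (deriv (deriv (Θfam ε))) s‖ ≤ K * ε ^ (-c)) :
    (∃ K' : ℝ, 0 < K' ∧ ∃ ε₀ ∈ Set.Ioc (0 : ℝ) 1, ∀ ε ∈ Set.Ioo (0 : ℝ) ε₀,
      ∀ s : ℝ, ∀ t ∈ Set.Ioo (-1 : ℝ) 1,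
        |WFun (Θfam ε) ε s t - ‖deriv (Θfam ε) s‖ ^ 2 / 2|
          ≤ K' * (ε ^ (4 - 2 * (a + b)) + ε ^ (2 - 2 * b)
              + ε ^ (2 - (a + c)) + ε ^ (2 - 4 * a))) ∧
    Filter.Tendsto
      (fun ε => ⨆ (s : ℝ) (t : Set.Ioo (-1 : ℝ) 1),
        |WFun (Θfam ε) ε s t - ‖deriv (Θfam ε) s‖ ^ 2 / 2|)
      (nhdsWithin 0 (Set.Ioi 0)) (nhds 0) := by
  have hbound : ∀ ε ∈ Set.Ioo (0 : ℝ) 1, ∀ s : ℝ, ∀ t ∈ Set.Ioo (-1 : ℝ) 1,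
      |WFun (Θfam ε) ε s t - ‖deriv (Θfam ε) s‖ ^ 2 / 2|
        ≤ 7 / 4 * (K ^ 2 + 1) ^ 2 * (ε ^ (4 - 2 * (a + b)) + ε ^ (2 - 2 * b)
            + ε ^ (2 - (a + c)) + ε ^ (2 - 4 * a)) := fun ε hε s t ht =>
    abs_WFun_sub_half_sq_le_rpow _ hε.1 s (abs_le.mpr ⟨ht.1.le, ht.2.le⟩)
      (h1 ε hε s) (h2 ε hε s) (h3 ε hε s)
  refine ⟨⟨_, by positivity, 1, ⟨one_pos, le_rfl⟩, hbound⟩, ?_⟩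
  have hlim : Tendsto (fun ε : ℝ => 7 / 4 * (K ^ 2 + 1) ^ 2 * (ε ^ (4 - 2 * (a + b))
      + ε ^ (2 - 2 * b) + ε ^ (2 - (a + c)) + ε ^ (2 - 4 * a))) (𝓝[>] 0) (𝓝 0) := by
    simpa using ((((tendsto_rpow_nhdsGT_zero (by linarith : (0 : ℝ) < 4 - 2 * (a + b))).add
      (tendsto_rpow_nhdsGT_zero (by linarith : (0 : ℝ) < 2 - 2 * b))).add
      (tendsto_rpow_nhdsGT_zero (by linarith : (0 : ℝ) < 2 - (a + c)))).add
      (tendsto_rpow_nhdsGT_zero (by linarith : (0 : ℝ) < 2 - 4 * a))).const_mul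
      (7 / 4 * (K ^ 2 + 1) ^ 2)
  have : Nonempty (Set.Ioo (-1 : ℝ) 1) := ⟨⟨0, by norm_num, by norm_num⟩⟩
  refine tendsto_of_tendsto_of_tendsto_of_le_of_le' tendsto_const_nhds hlim
    (Eventually.of_forall fun ε => Real.iSup_nonneg fun s => Real.iSup_nonneg fun t =>
      abs_nonneg _) ?_
  filter_upwards [Ioo_mem_nhdsGT one_pos] with ε hε
  exact ciSup_le fun s => ciSup_le fun t => hbound ε hε s t t.2

/-- Under the bounds `|Θ_ε'| ≤ Kε⁻ᵃ`, `|Θ_ε''| ≤ Kε⁻ᵇ`, `|Θ_ε'''| ≤ Kε⁻ᶜ`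
with `b < 1`, `a + c < 2`, there is `K' > 0` with
`‖W_ε − |Θ_ε'|²/2‖_∞ ≤ K'(ε^{4-2(a+b)} + ε^{2-2b} + ε^{2-(a+c)} + ε^{2-4a})`
for all small `ε`; in particular `W_ε − |Θ_ε'|²/2 → 0` uniformly. -/
theorem stmt_19 (n : ℕ) (a b c K : ℝ) (ha : 0 < a) (ha' : a < 1 / 3)
    (hb : b < 1) (hac : a + c < 2) (hK : 0 < K)
    (Θfam : ℝ → ℝ → EuclideanSpace ℝ (Fin n))
    (hreg : ∀ ε ∈ Set.Ioo (0 : ℝ) 1, ContDiff ℝ 3 (Θfam ε))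
    (h1 : ∀ ε ∈ Set.Ioo (0 : ℝ) 1, ∀ s : ℝ, ‖deriv (Θfam ε) s‖ ≤ K * ε ^ (-a))
    (h2 : ∀ ε ∈ Set.Ioo (0 : ℝ) 1, ∀ s : ℝ,
      ‖deriv (deriv (Θfam ε)) s‖ ≤ K * ε ^ (-b))
    (h3 : ∀ ε ∈ Set.Ioo (0 : ℝ) 1, ∀ s : ℝ,
      ‖deriv (deriv (deriv (Θfam ε))) s‖ ≤ K * ε ^ (-c)) :
    (∃ K' : ℝ, 0 < K' ∧ ∃ ε₀ ∈ Set.Ioc (0 : ℝ) 1, ∀ ε ∈ Set.Ioo (0 : ℝ) ε₀,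
      ∀ s : ℝ, ∀ t ∈ Set.Ioo (-1 : ℝ) 1,
        |WFun (Θfam ε) ε s t - ‖deriv (Θfam ε) s‖ ^ 2 / 2|
          ≤ K' * (ε ^ (4 - 2 * (a + b)) + ε ^ (2 - 2 * b)
              + ε ^ (2 - (a + c)) + ε ^ (2 - 4 * a))) ∧
    Filter.Tendsto
      (fun ε => ⨆ (s : ℝ) (t : Set.Ioo (-1 : ℝ) 1),
        |WFun (Θfam ε) ε s t - ‖deriv (Θfam ε) s‖ ^ 2 / 2|)
      (nhdsWithin 0 (Set.Ioi 0)) (nhds 0) :=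
  stmt_19_general n a b c K ha' hb hac Θfam h1 h2 h3
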